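/- Let Ψ be a root datum with finite automorphism group Γ stabilizing a base, and suppose β, β′ ∈ Φ are distinct with i*β = i*β′. Then Σ_{θ ∈ Γ·β} ⟨β′, θ^∨⟩ = Σ_{θ ∈ Γ·β} ⟨β, θ^∨⟩, and this common value equals 2 if the orbit Γ·β is pairwise orthogonal and 1 otherwise. -/

import Mathlib

open scoped BigOperators Classical

/-- A (not necessarily reduced) root datum `Ψ = (X*, Φ, X_*, Φ^∨)`:
dual lattices `X`, `Y` in perfect duality, a finite set of roots, and a
coroot map satisfying the usual axioms. -/
structure ZRootDatum (X Y : Type) [AddCommGroup X] [AddCommGroup Y] : Type where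
  pair : X →+ Y →+ ℤ
  perfect : Function.Bijective fun x : X => pair x
  perfect' : Function.Bijective fun y : Y => pair.flip y
  roots : Finset X
  coroot : X → Y
  pair_self : ∀ β ∈ roots, pair β (coroot β) = 2
  reflect_mem : ∀ β ∈ roots, ∀ x ∈ roots, x - pair x (coroot β) • β ∈ roots
  coreflect_mem : ∀ β ∈ roots, ∀ β' ∈ roots,
    ∃ β'' ∈ roots, coroot β' - pair β (coroot β') • coroot β = coroot β''

/-- The multiplicative group structure (composition) that `AddAut A` carried in the older
Mathlib; the current Mathlib makes `AddAut A` an additive group instead. -/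
instance AddAut.group (A : Type*) [Add A] : Group (AddAut A) where
  mul g h := AddEquiv.trans h g
  one := AddEquiv.refl _
  inv := AddEquiv.symm
  mul_assoc _ _ _ := rfl
  one_mul _ := rfl
  mul_one _ := rfl
  inv_mul_cancel := AddEquiv.self_trans_symm

variable {X Y Γ : Type} [AddCommGroup X] [AddCommGroup Y] [Group Γ]

/-- The Weyl group of a root datum: the subgroup of `Aut(X)` generated by the
reflections `w_β : x ↦ x - ⟨x, β^∨⟩β` through the roots. -/
def ZRootDatum.weylGroup (Ψ : ZRootDatum X Y) : Subgroup (AddAut X) :=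
  Subgroup.closure {w : AddAut X | ∃ β ∈ Ψ.roots, ∀ x, w x = x - Ψ.pair x (Ψ.coroot β) • β}

/-- `Δ` is a base (system of simple roots) of the root datum. -/
def ZRootDatum.IsBase (Ψ : ZRootDatum X Y) (Δ : Finset X) : Prop :=
  (↑Δ : Set X) ⊆ ↑Ψ.roots ∧
  LinearIndependent ℤ (fun a : ↥(↑Δ : Set X) => (a : X)) ∧
  ∀ β ∈ Ψ.roots, ∃ c : X → ℤ,
    β = ∑ a ∈ Δ, c a • a ∧ ((∀ a ∈ Δ, 0 ≤ c a) ∨ (∀ a ∈ Δ, c a ≤ 0))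

/-- A group `Γ` acting (via `ρ` on `X*` and `ρ'` on `X_*`) by automorphisms of
the root datum `Ψ`. -/
structure RDAction (Ψ : ZRootDatum X Y) (ρ : Γ →* AddAut X) (ρ' : Γ →* AddAut Y) : Prop where
  pair_eq : ∀ γ x y, Ψ.pair (ρ γ x) (ρ' γ y) = Ψ.pair x y
  root_mem : ∀ γ, ∀ β ∈ Ψ.roots, ρ γ β ∈ Ψ.roots
  coroot_eq : ∀ γ, ∀ β ∈ Ψ.roots, Ψ.coroot (ρ γ β) = ρ' γ (Ψ.coroot β)

/-- The norm map `N : x ↦ ∑_{γ ∈ Γ} γ·x`.  For a free lattice `X`, its kernel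
is exactly the kernel of the projection of `X` onto the coinvariants `X_Γ`
modulo torsion. -/
noncomputable def normMap [Fintype Γ] (ρ : Γ →* AddAut X) : X →+ X :=
  ∑ γ : Γ, ((ρ γ : X ≃+ X) : X →+ X)

/-- The projection `i* : X* → X̄*` onto the coinvariant lattice modulo torsion. -/
noncomputable def istar [Fintype Γ] (ρ : Γ →* AddAut X) : X →+ X ⧸ (normMap ρ).ker :=
  QuotientAddGroup.mk' (normMap ρ).ker


/-- The `Γ`-orbit of `β`. -/
noncomputable def orb [Fintype Γ] (ρ : Γ →* AddAut X) (β : X) : Finset X :=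
  Finset.image (fun γ : Γ => ρ γ β) Finset.univ

/-- A set of roots is (pairwise) orthogonal if distinct members pair to `0`
with each other's coroots. -/
def IsOrthogonalSet (Ψ : ZRootDatum X Y) (S : Finset X) : Prop :=
  ∀ θ ∈ S, ∀ θ' ∈ S, θ ≠ θ' → Ψ.pair θ (Ψ.coroot θ') = 0

/-- The (unique, when it exists) root in the orbit of `β` distinct from and not
orthogonal to `θ`. -/
noncomputable def partner [Fintype Γ] (Ψ : ZRootDatum X Y) (ρ : Γ →* AddAut X) (β θ : X) : X :=
  if h : ∃ θ', θ' ∈ orb ρ β ∧ θ' ≠ θ ∧ Ψ.pair θ (Ψ.coroot θ') ≠ 0 then h.choose else 0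

/-- The orthogonal `Γ`-orbit `Ξ_β` attached to `β`:  `Γ·β` itself if that orbit
is orthogonal, and `{θ + θ' : θ ∈ Γ·β}` otherwise. -/
noncomputable def Xi [Fintype Γ] (Ψ : ZRootDatum X Y) (ρ : Γ →* AddAut X) (β : X) : Finset X :=
  if IsOrthogonalSet Ψ (orb ρ β) then orb ρ β
  else (orb ρ β).image fun θ => θ + partner Ψ ρ β θ

/-- The restricted coroot `α^∨ = (|Γ·β|/|Ξ_β|) ∑_{ξ ∈ Ξ_β} ξ^∨` attached to
`α = i*(β)`. -/
noncomputable def restCoroot [Fintype Γ] (Ψ : ZRootDatum X Y) (ρ : Γ →* AddAut X) (β : X) : Y :=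
  (((orb ρ β).card / (Xi Ψ ρ β).card : ℕ) : ℤ) • ∑ ξ ∈ Xi Ψ ρ β, Ψ.coroot ξ

/-!
Pairing with the coroot sum `∑_{θ ∈ Γ·β} θ^∨`, which `Γ` fixes, is a `Γ`-invariant functional, so
`|Γ| ⟨x, ∑ θ^∨⟩ = ⟨N x, ∑ θ^∨⟩` for the norm map `N`; hence it only depends on `i* x`.

For the value, the form `B x y = ∑_{c ∈ Φ^∨} ⟨x, c⟩ ⟨y, c⟩` is invariant under the reflections
and under `Γ`, which gives `⟨x, θ^∨⟩ B θ θ = 2 B x θ` and the usual consequences: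
`⟨x, y^∨⟩ ⟨y, x^∨⟩ ≤ 4`, and `x - y` (resp. `x + y`) is a root when `⟨x, y^∨⟩ > 0` and `x ≠ y`
(resp. `⟨x, y^∨⟩ < 0` and `x ≠ -y`).
As `Γ` stabilizes a base, `N` vanishes on no root, so for `θ ≠ θ'` in the orbit `θ - θ'` is not a
root and `⟨θ, θ'^∨⟩ ≤ 0`. Thus `S = ∑_{θ ∈ Γ·β} ⟨β, θ^∨⟩` is `2` for an orthogonal orbit and at
most `1` otherwise. Finally `S > 0`: if `A ⊆ Γ·β` is maximal with `u = ∑ A` a root, then adding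
any neighbour of `A` would give a larger such set, so `⟨θ, t^∨⟩ = 0` for `θ ∈ A`, `t ∉ A`, and
`2 B u u = |A| S B β β`.
-/

namespace ZRootDatum

theorem isAddTorsionFree (Ψ : ZRootDatum X Y) : IsAddTorsionFree X := by
  refine ⟨fun n hn x x' h => Ψ.perfect.1 (AddMonoidHom.ext fun y => ?_)⟩
  have := congrArg (fun z => Ψ.pair z y) h
  simpa [hn] using this

variable (Ψ : ZRootDatum X Y)

theorem neg_mem_roots {θ : X} (hθ : θ ∈ Ψ.roots) : -θ ∈ Ψ.roots := by
  simpa [Ψ.pair_self θ hθ, two_smul] using Ψ.reflect_mem θ hθ θ hθ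

theorem ne_zero_of_mem_roots {θ : X} (hθ : θ ∈ Ψ.roots) : θ ≠ 0 := by
  rintro rfl
  simpa using Ψ.pair_self 0 hθ

noncomputable def coroots : Finset Y := Ψ.roots.image Ψ.coroot

-- Summing over the set of coroots, not over the roots, makes every coreflection a permutation
-- of the index set (the coroot map need not be injective on the roots).
noncomputable def rootForm : LinearMap.BilinForm ℤ X :=
  ∑ c ∈ Ψ.coroots, (LinearMap.mul ℤ ℤ).compl₁₂ (Ψ.pair.flip c).toIntLinearMap
    (Ψ.pair.flip c).toIntLinearMap

theorem rootForm_apply (x y : X) :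
    Ψ.rootForm x y = ∑ c ∈ Ψ.coroots, Ψ.pair x c * Ψ.pair y c := by
  simp [rootForm, LinearMap.sum_apply]

theorem rootForm_comm (x y : X) : Ψ.rootForm x y = Ψ.rootForm y x := by
  simp only [rootForm_apply, mul_comm]

theorem rootForm_self_nonneg (x : X) : 0 ≤ Ψ.rootForm x x := by
  rw [rootForm_apply]
  exact Finset.sum_nonneg fun _ _ => mul_self_nonneg _

theorem rootForm_self_pos {θ : X} (hθ : θ ∈ Ψ.roots) : 0 < Ψ.rootForm θ θ := by
  rw [rootForm_apply]
  have hmem : Ψ.coroot θ ∈ Ψ.coroots := Finset.mem_image_of_mem _ hθ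
  refine lt_of_lt_of_le ?_ (Finset.single_le_sum (fun c _ => mul_self_nonneg (Ψ.pair θ c)) hmem)
  simp [Ψ.pair_self θ hθ]

theorem coreflection_mem_coroots {θ : X} (hθ : θ ∈ Ψ.roots) {c : Y} (hc : c ∈ Ψ.coroots) :
    c - Ψ.pair θ c • Ψ.coroot θ ∈ Ψ.coroots := by
  obtain ⟨α, hα, rfl⟩ := Finset.mem_image.mp hc
  obtain ⟨α', hα', h⟩ := Ψ.coreflect_mem θ hθ α hα
  exact h ▸ Finset.mem_image_of_mem _ hα'

theorem coreflection_coreflection {θ : X} (hθ : θ ∈ Ψ.roots) (c : Y) :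
    (c - Ψ.pair θ c • Ψ.coroot θ) - Ψ.pair θ (c - Ψ.pair θ c • Ψ.coroot θ) • Ψ.coroot θ = c := by
  simp only [map_sub, map_zsmul, Ψ.pair_self θ hθ, smul_eq_mul]
  module

theorem pair_reflection (θ x : X) (c : Y) :
    Ψ.pair (x - Ψ.pair x (Ψ.coroot θ) • θ) c = Ψ.pair x (c - Ψ.pair θ c • Ψ.coroot θ) := by
  simp only [map_sub, map_zsmul, AddMonoidHom.sub_apply, AddMonoidHom.smul_apply, smul_eq_mul]
  ring

theorem rootForm_reflection {θ : X} (hθ : θ ∈ Ψ.roots) (x y : X) :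
    Ψ.rootForm (x - Ψ.pair x (Ψ.coroot θ) • θ) (y - Ψ.pair y (Ψ.coroot θ) • θ) =
      Ψ.rootForm x y := by
  simp only [rootForm_apply, pair_reflection]
  exact Finset.sum_nbij' _ _ (fun c => Ψ.coreflection_mem_coroots hθ)
    (fun c => Ψ.coreflection_mem_coroots hθ) (fun c _ => Ψ.coreflection_coreflection hθ c)
    (fun c _ => Ψ.coreflection_coreflection hθ c) fun _ _ => rfl

theorem pair_mul_rootForm_self {θ : X} (hθ : θ ∈ Ψ.roots) (x : X) :
    Ψ.pair x (Ψ.coroot θ) * Ψ.rootForm θ θ = 2 * Ψ.rootForm x θ := by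
  have h := Ψ.rootForm_reflection hθ x θ
  rw [Ψ.pair_self θ hθ, show θ - (2 : ℤ) • θ = -θ by module] at h
  simp only [map_sub, map_neg, map_zsmul, LinearMap.sub_apply, LinearMap.smul_apply,
    smul_eq_mul] at h
  linarith [Ψ.rootForm_comm θ x]

theorem pair_mul_pair_le_four {x y : X} (hx : x ∈ Ψ.roots) (hy : y ∈ Ψ.roots) :
    Ψ.pair x (Ψ.coroot y) * Ψ.pair y (Ψ.coroot x) ≤ 4 := by
  have hxy := Ψ.pair_mul_rootForm_self hy x
  have hyx := Ψ.pair_mul_rootForm_self hx y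
  have hcs := Ψ.rootForm.apply_mul_apply_le_of_forall_zero_le Ψ.rootForm_self_nonneg x y
  have hpos := mul_pos (Ψ.rootForm_self_pos hx) (Ψ.rootForm_self_pos hy)
  refine le_of_mul_le_mul_right ?_ hpos
  calc _ = (Ψ.pair x (Ψ.coroot y) * Ψ.rootForm y y) *
        (Ψ.pair y (Ψ.coroot x) * Ψ.rootForm x x) := by ring
    _ = 4 * (Ψ.rootForm x y * Ψ.rootForm y x) := by rw [hxy, hyx]; ring
    _ ≤ 4 * (Ψ.rootForm x x * Ψ.rootForm y y) := by linarith

theorem pair_pos_of_pair_pos {x y : X} (hx : x ∈ Ψ.roots) (hy : y ∈ Ψ.roots)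
    (h : 0 < Ψ.pair x (Ψ.coroot y)) : 0 < Ψ.pair y (Ψ.coroot x) := by
  have hxy := Ψ.pair_mul_rootForm_self hy x
  have hyx := Ψ.pair_mul_rootForm_self hx y
  rw [Ψ.rootForm_comm y x, ← hxy] at hyx
  exact pos_of_mul_pos_left (hyx ▸ mul_pos h (Ψ.rootForm_self_pos hy))
    (Ψ.rootForm_self_pos hx).le

theorem exists_add_nsmul_notMem_roots (x : X) {ζ : X} (hζ : ζ ≠ 0) :
    ∃ k : ℕ, x + k • ζ ∉ Ψ.roots := by
  have := Ψ.isAddTorsionFree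
  by_contra! h
  have hinj : Function.Injective fun k : ℕ => x + k • ζ :=
    (add_right_injective x).comp fun a b hab =>
      Nat.cast_injective (smul_left_injective ℤ hζ (by simpa only [natCast_zsmul] using hab))
  exact Set.infinite_of_injective_forall_mem hinj h Ψ.roots.finite_toSet

theorem eq_of_pair_eq_two {x y : X} (hx : x ∈ Ψ.roots) (hy : y ∈ Ψ.roots)
    (hxy : Ψ.pair x (Ψ.coroot y) = 2) (hyx : Ψ.pair y (Ψ.coroot x) = 2) : x = y := by
  set w := (2 : ℤ) • (y - x)
  have hwx : Ψ.pair w (Ψ.coroot x) = 0 := by simp [w, hyx, Ψ.pair_self x hx]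
  have hwy : Ψ.pair w (Ψ.coroot y) = 0 := by simp [w, hxy, Ψ.pair_self y hy]
  -- `s_y ∘ s_x` translates the roots `x + k • w` by `w`
  have hprog : ∀ k : ℕ, x + k • w ∈ Ψ.roots := by
    intro k
    induction k with
    | zero => simpa using hx
    | succ k ih =>
      have h1 := Ψ.reflect_mem x hx _ ih
      have h2 := Ψ.reflect_mem y hy _ h1
      simp only [map_add, map_nsmul, map_sub, map_zsmul, AddMonoidHom.add_apply,
        AddMonoidHom.sub_apply, AddMonoidHom.smul_apply, hwx, hwy, hxy, Ψ.pair_self x hx,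
        smul_zero, add_zero, smul_eq_mul] at h2
      convert h2 using 1
      simp only [w]
      module
  have := Ψ.isAddTorsionFree
  by_contra hne
  have hw : w ≠ 0 := smul_ne_zero two_ne_zero (sub_ne_zero.mpr (Ne.symm hne))
  obtain ⟨k, hk⟩ := Ψ.exists_add_nsmul_notMem_roots x hw
  exact hk (hprog k)

theorem sub_mem_roots_of_pair_pos {x y : X} (hx : x ∈ Ψ.roots) (hy : y ∈ Ψ.roots) (hne : x ≠ y)
    (h : 0 < Ψ.pair x (Ψ.coroot y)) : x - y ∈ Ψ.roots := by
  have h' := Ψ.pair_pos_of_pair_pos hx hy h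
  have h4 := Ψ.pair_mul_pair_le_four hx hy
  by_cases hp : Ψ.pair x (Ψ.coroot y) = 1
  · simpa [hp] using Ψ.reflect_mem y hy x hx
  by_cases hq : Ψ.pair y (Ψ.coroot x) = 1
  · simpa [hq] using Ψ.neg_mem_roots (Ψ.reflect_mem x hx y hy)
  have hp2 : 2 ≤ Ψ.pair x (Ψ.coroot y) := by omega
  have hq2 : 2 ≤ Ψ.pair y (Ψ.coroot x) := by omega
  exact absurd (Ψ.eq_of_pair_eq_two hx hy (by nlinarith) (by nlinarith)) hne

theorem add_mem_roots_of_pair_neg {x y : X} (hx : x ∈ Ψ.roots) (hy : y ∈ Ψ.roots)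
    (hne : x + y ≠ 0) (h : Ψ.pair x (Ψ.coroot y) < 0) : x + y ∈ Ψ.roots := by
  have hne' : -x ≠ y := fun h' => hne (by rw [← h', add_neg_cancel])
  have := Ψ.sub_mem_roots_of_pair_pos (Ψ.neg_mem_roots hx) hy hne' (by simpa using h)
  simpa [add_comm] using Ψ.neg_mem_roots this

theorem exists_maximal_subset_sum_mem_roots {s : Finset X} {β : X} (hβs : β ∈ s)
    (hβ : β ∈ Ψ.roots) :
    ∃ A ⊆ s, (∑ θ ∈ A, θ) ∈ Ψ.roots ∧ ∀ t ∈ s, t ∉ A → (∑ θ ∈ A, θ) + t ∉ Ψ.roots := by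
  obtain ⟨A, hA, hmax⟩ := Finset.exists_max_image
    (s.powerset.filter fun A => (∑ θ ∈ A, θ) ∈ Ψ.roots) Finset.card ⟨{β}, by simp [hβs, hβ]⟩
  rw [Finset.mem_filter, Finset.mem_powerset] at hA
  refine ⟨A, hA.1, hA.2, fun t ht htA hroot => ?_⟩
  have hins := hmax (insert t A) (by
    rw [Finset.mem_filter, Finset.mem_powerset, Finset.sum_insert htA, add_comm]
    exact ⟨Finset.insert_subset ht hA.1, hroot⟩)
  rw [Finset.card_insert_of_notMem htA] at hins
  omega

end ZRootDatum

section Action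

variable {A : Type} [AddCommGroup A] (σ : Γ →* AddAut A)

theorem map_inv_apply_apply (γ : Γ) (x : A) : σ γ⁻¹ (σ γ x) = x := by
  rw [map_inv]
  exact (σ γ).symm_apply_apply x

theorem map_apply_inv_apply (γ : Γ) (x : A) : σ γ (σ γ⁻¹ x) = x := by
  rw [map_inv]
  exact (σ γ).apply_symm_apply x

theorem map_mul_apply (γ δ : Γ) (x : A) : σ (γ * δ) x = σ γ (σ δ x) := by
  rw [map_mul]
  rfl

end Action

section Orbit

variable {Ψ : ZRootDatum X Y} {ρ : Γ →* AddAut X} {ρ' : Γ →* AddAut Y}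

theorem RDAction.pair_map_of_map_eq (hact : RDAction Ψ ρ ρ') {γ : Γ} {y : Y} (hy : ρ' γ y = y)
    (x : X) : Ψ.pair (ρ γ x) y = Ψ.pair x y := by
  conv_lhs => rw [← hy]
  exact hact.pair_eq γ x y

theorem RDAction.rootForm_map (hact : RDAction Ψ ρ ρ') (γ : Γ) (x y : X) :
    Ψ.rootForm (ρ γ x) (ρ γ y) = Ψ.rootForm x y := by
  have hmem : ∀ δ : Γ, ∀ c ∈ Ψ.coroots, ρ' δ c ∈ Ψ.coroots := by
    intro δ c hc
    obtain ⟨α, hα, rfl⟩ := Finset.mem_image.mp hc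
    exact hact.coroot_eq δ α hα ▸ Finset.mem_image_of_mem _ (hact.root_mem δ α hα)
  simp only [ZRootDatum.rootForm_apply]
  refine (Finset.sum_nbij' (ρ' γ) (ρ' γ⁻¹) (hmem γ) (hmem γ⁻¹)
    (fun c _ => map_inv_apply_apply ρ' γ c) (fun c _ => map_apply_inv_apply ρ' γ c)
    (fun c _ => ?_)).symm
  rw [hact.pair_eq, hact.pair_eq]

variable [Fintype Γ]

theorem mem_orb {β θ : X} : θ ∈ orb ρ β ↔ ∃ γ, ρ γ β = θ := by
  simp [orb]

theorem mem_orb_self (ρ : Γ →* AddAut X) (β : X) : β ∈ orb ρ β :=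
  mem_orb.mpr ⟨1, by rw [map_one]; rfl⟩

theorem apply_mem_orb {β θ : X} (hθ : θ ∈ orb ρ β) (γ : Γ) : ρ γ θ ∈ orb ρ β := by
  obtain ⟨δ, rfl⟩ := mem_orb.mp hθ
  exact mem_orb.mpr ⟨γ * δ, map_mul_apply ρ γ δ β⟩

theorem RDAction.mem_roots_of_mem_orb (hact : RDAction Ψ ρ ρ') {β θ : X} (hβ : β ∈ Ψ.roots)
    (hθ : θ ∈ orb ρ β) : θ ∈ Ψ.roots := by
  obtain ⟨γ, rfl⟩ := mem_orb.mp hθ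
  exact hact.root_mem γ β hβ

theorem RDAction.map_sum_coroot_orb (hact : RDAction Ψ ρ ρ') {β : X} (hβ : β ∈ Ψ.roots) (γ : Γ) :
    ρ' γ (∑ θ ∈ orb ρ β, Ψ.coroot θ) = ∑ θ ∈ orb ρ β, Ψ.coroot θ := by
  rw [map_sum]
  refine Finset.sum_nbij' (ρ γ) (ρ γ⁻¹) (fun θ hθ => apply_mem_orb hθ γ)
    (fun θ hθ => apply_mem_orb hθ γ⁻¹) (fun θ _ => map_inv_apply_apply ρ γ θ)
    (fun θ _ => map_apply_inv_apply ρ γ θ) (fun θ hθ => ?_)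
  exact (hact.coroot_eq γ θ (hact.mem_roots_of_mem_orb hβ hθ)).symm

theorem normMap_apply (x : X) : normMap ρ x = ∑ γ : Γ, ρ γ x := by
  rw [normMap, AddMonoidHom.finsetSum_apply]
  rfl

theorem normMap_map (γ : Γ) (x : X) : normMap ρ (ρ γ x) = normMap ρ x := by
  simp only [normMap_apply, ← map_mul_apply]
  exact Fintype.sum_equiv (Equiv.mulRight γ) _ _ fun _ => rfl

theorem normMap_eq_of_mem_orb {β θ : X} (hθ : θ ∈ orb ρ β) : normMap ρ θ = normMap ρ β := by
  obtain ⟨γ, rfl⟩ := mem_orb.mp hθ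
  exact normMap_map γ β

theorem normMap_eq_of_istar_eq {x x' : X} (h : istar ρ x = istar ρ x') :
    normMap ρ x = normMap ρ x' := by
  rw [← sub_eq_zero, ← map_sub]
  exact QuotientAddGroup.eq_iff_sub_mem.mp h

theorem RDAction.card_mul_pair_eq_pair_normMap (hact : RDAction Ψ ρ ρ') {y : Y}
    (hy : ∀ γ, ρ' γ y = y) (x : X) :
    (Fintype.card Γ : ℤ) * Ψ.pair x y = Ψ.pair (normMap ρ x) y := by
  simp only [normMap_apply, map_sum, AddMonoidHom.finsetSum_apply,
    hact.pair_map_of_map_eq (hy _), Finset.sum_const, Finset.card_univ, nsmul_eq_mul]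

theorem RDAction.pair_eq_of_istar_eq (hact : RDAction Ψ ρ ρ') {y : Y} (hy : ∀ γ, ρ' γ y = y)
    {x x' : X} (h : istar ρ x = istar ρ x') : Ψ.pair x y = Ψ.pair x' y := by
  have hcard : (Fintype.card Γ : ℤ) ≠ 0 := by exact_mod_cast Fintype.card_ne_zero
  refine mul_left_cancel₀ hcard ?_
  rw [hact.card_mul_pair_eq_pair_normMap hy, hact.card_mul_pair_eq_pair_normMap hy,
    normMap_eq_of_istar_eq h]

theorem RDAction.sum_pair_coroot_orb_eq (hact : RDAction Ψ ρ ρ') {β θ : X} (hβ : β ∈ Ψ.roots)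
    (hθ : θ ∈ orb ρ β) :
    ∑ t ∈ orb ρ β, Ψ.pair θ (Ψ.coroot t) = ∑ t ∈ orb ρ β, Ψ.pair β (Ψ.coroot t) := by
  obtain ⟨γ, rfl⟩ := mem_orb.mp hθ
  simp only [← map_sum]
  exact hact.pair_map_of_map_eq (hact.map_sum_coroot_orb hβ γ) β

theorem normMap_ne_zero_of_mem_roots {Δ : Finset X} (hΔ : Ψ.IsBase Δ)
    (hstab : ∀ γ : Γ, ∀ a ∈ Δ, ρ γ a ∈ Δ) {r : X} (hr : r ∈ Ψ.roots) : normMap ρ r ≠ 0 := by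
  obtain ⟨c, hrep, hsign⟩ := hΔ.2.2 r hr
  have hN : normMap ρ r = ∑ a ∈ Δ, (∑ γ : Γ, c (ρ γ⁻¹ a)) • a := by
    calc normMap ρ r = ∑ γ : Γ, ∑ a ∈ Δ, c a • ρ γ a := by
          rw [normMap_apply, hrep]
          simp only [map_sum, map_zsmul]
      _ = ∑ γ : Γ, ∑ a ∈ Δ, c (ρ γ⁻¹ a) • a := by
          refine Finset.sum_congr rfl fun γ _ => Finset.sum_nbij' (ρ γ) (ρ γ⁻¹) (hstab γ)
            (hstab γ⁻¹) (fun a _ => map_inv_apply_apply ρ γ a)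
            (fun a _ => map_apply_inv_apply ρ γ a) fun a _ => ?_
          rw [map_inv_apply_apply]
      _ = _ := by simp only [Finset.sum_smul]; exact Finset.sum_comm
  intro h0
  rw [h0, eq_comm] at hN
  have hcoeff := (linearIndepOn_finset_iff (v := id)).mp hΔ.2.1 _ hN
  -- the coefficient of `a` in `N r` is a sum of terms of one sign, among them `c a`
  have hc : ∀ a ∈ Δ, c a = 0 := by
    intro a ha
    have hmem : ∀ γ ∈ (Finset.univ : Finset Γ), ρ γ⁻¹ a ∈ Δ := fun γ _ => hstab γ⁻¹ a ha
    have h1 : c (ρ 1⁻¹ a) = c a := by rw [inv_one, map_one]; rfl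
    rw [← h1]
    rcases hsign with hpos | hneg
    · exact (Finset.sum_eq_zero_iff_of_nonneg fun γ hγ => hpos _ (hmem γ hγ)).mp
        (hcoeff a ha) 1 (Finset.mem_univ _)
    · exact (Finset.sum_eq_zero_iff_of_nonpos fun γ hγ => hneg _ (hmem γ hγ)).mp
        (hcoeff a ha) 1 (Finset.mem_univ _)
  refine Ψ.ne_zero_of_mem_roots hr ?_
  rw [hrep]
  exact Finset.sum_eq_zero fun a ha => by rw [hc a ha, zero_smul]

theorem normMap_sum_of_subset_orb {A : Finset X} {β : X} (hA : A ⊆ orb ρ β) :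
    normMap ρ (∑ θ ∈ A, θ) = A.card • normMap ρ β := by
  rw [map_sum, Finset.sum_congr rfl fun θ hθ => normMap_eq_of_mem_orb (hA hθ), Finset.sum_const]

variable {Δ : Finset X} {β : X}

theorem pair_coroot_nonpos_of_mem_orb (hact : RDAction Ψ ρ ρ') (hΔ : Ψ.IsBase Δ)
    (hstab : ∀ γ : Γ, ∀ a ∈ Δ, ρ γ a ∈ Δ) (hβ : β ∈ Ψ.roots) {θ θ' : X} (hθ : θ ∈ orb ρ β)
    (hθ' : θ' ∈ orb ρ β) (hne : θ ≠ θ') : Ψ.pair θ (Ψ.coroot θ') ≤ 0 := by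
  by_contra! h
  refine normMap_ne_zero_of_mem_roots hΔ hstab (Ψ.sub_mem_roots_of_pair_pos
    (hact.mem_roots_of_mem_orb hβ hθ) (hact.mem_roots_of_mem_orb hβ hθ') hne h) ?_
  rw [map_sub, normMap_eq_of_mem_orb hθ, normMap_eq_of_mem_orb hθ', sub_self]

theorem pair_coroot_eq_zero_of_maximal (hact : RDAction Ψ ρ ρ') (hΔ : Ψ.IsBase Δ)
    (hstab : ∀ γ : Γ, ∀ a ∈ Δ, ρ γ a ∈ Δ) (hβ : β ∈ Ψ.roots) {A : Finset X}
    (hA : A ⊆ orb ρ β) (hu : (∑ θ ∈ A, θ) ∈ Ψ.roots)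
    (hmax : ∀ t ∈ orb ρ β, t ∉ A → (∑ θ ∈ A, θ) + t ∉ Ψ.roots) {θ t : X} (hθ : θ ∈ A)
    (ht : t ∈ orb ρ β) (htA : t ∉ A) : Ψ.pair θ (Ψ.coroot t) = 0 := by
  have hnonpos : ∀ θ' ∈ A, Ψ.pair θ' (Ψ.coroot t) ≤ 0 := fun θ' hθ' =>
    pair_coroot_nonpos_of_mem_orb hact hΔ hstab hβ (hA hθ') ht (ne_of_mem_of_not_mem hθ' htA)
  by_contra h0
  have hneg : Ψ.pair (∑ θ' ∈ A, θ') (Ψ.coroot t) < 0 := by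
    rw [map_sum, AddMonoidHom.finsetSum_apply, ← Finset.add_sum_erase A _ hθ]
    have := Finset.sum_nonpos (s := A.erase θ) fun θ' hθ' =>
      hnonpos θ' (Finset.mem_of_mem_erase hθ')
    linarith [lt_of_le_of_ne (hnonpos θ hθ) h0]
  have hne : (∑ θ' ∈ A, θ') + t ≠ 0 := by
    have := Ψ.isAddTorsionFree
    intro h
    have hN := congrArg (normMap ρ) h
    rw [map_add, normMap_sum_of_subset_orb hA, normMap_eq_of_mem_orb ht, map_zero,
      ← succ_nsmul] at hN
    exact normMap_ne_zero_of_mem_roots hΔ hstab hβ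
      ((nsmul_eq_zero_iff_right (Nat.succ_ne_zero _)).mp hN)
  exact hmax t ht htA (Ψ.add_mem_roots_of_pair_neg hu (hact.mem_roots_of_mem_orb hβ ht) hne hneg)

theorem sum_pair_coroot_orb_pos (hact : RDAction Ψ ρ ρ') (hΔ : Ψ.IsBase Δ)
    (hstab : ∀ γ : Γ, ∀ a ∈ Δ, ρ γ a ∈ Δ) (hβ : β ∈ Ψ.roots) :
    0 < ∑ t ∈ orb ρ β, Ψ.pair β (Ψ.coroot t) := by
  set S := ∑ t ∈ orb ρ β, Ψ.pair β (Ψ.coroot t)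
  obtain ⟨A, hA, hu, hmax⟩ := Ψ.exists_maximal_subset_sum_mem_roots (mem_orb_self ρ β) hβ
  set u := ∑ θ ∈ A, θ
  have hrow : ∀ θ ∈ A, 2 * Ψ.rootForm θ u = S * Ψ.rootForm β β := by
    intro θ hθ
    calc 2 * Ψ.rootForm θ u = ∑ t ∈ A, Ψ.pair θ (Ψ.coroot t) * Ψ.rootForm β β := by
          rw [map_sum, Finset.mul_sum]
          refine Finset.sum_congr rfl fun t ht => ?_
          obtain ⟨γ, rfl⟩ := mem_orb.mp (hA ht)
          rw [← hact.rootForm_map γ β β, Ψ.pair_mul_rootForm_self (hact.root_mem γ β hβ)]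
      _ = ∑ t ∈ orb ρ β, Ψ.pair θ (Ψ.coroot t) * Ψ.rootForm β β :=
          Finset.sum_subset hA fun t ht htA => by
            rw [pair_coroot_eq_zero_of_maximal hact hΔ hstab hβ hA hu hmax hθ ht htA, zero_mul]
      _ = S * Ψ.rootForm β β := by rw [← Finset.sum_mul, hact.sum_pair_coroot_orb_eq hβ (hA hθ)]
  have hdiag : 2 * Ψ.rootForm u u = A.card * (S * Ψ.rootForm β β) := by
    rw [LinearMap.map_sum₂, Finset.mul_sum, Finset.sum_congr rfl hrow, Finset.sum_const,
      nsmul_eq_mul]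
  have hb := Ψ.rootForm_self_pos hβ
  by_contra! hS
  have : (A.card : ℤ) * (S * Ψ.rootForm β β) ≤ 0 :=
    mul_nonpos_of_nonneg_of_nonpos (by positivity) (mul_nonpos_of_nonpos_of_nonneg hS hb.le)
  linarith [Ψ.rootForm_self_pos hu]

theorem sum_pair_coroot_orb_le (hact : RDAction Ψ ρ ρ') (hΔ : Ψ.IsBase Δ)
    (hstab : ∀ γ : Γ, ∀ a ∈ Δ, ρ γ a ∈ Δ) (hβ : β ∈ Ψ.roots) {θ θ' : X} (hθ : θ ∈ orb ρ β)
    (hθ' : θ' ∈ orb ρ β) (hne : θ ≠ θ') :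
    ∑ t ∈ orb ρ β, Ψ.pair β (Ψ.coroot t) ≤ 2 + Ψ.pair θ (Ψ.coroot θ') := by
  rw [← hact.sum_pair_coroot_orb_eq hβ hθ]
  calc ∑ t ∈ orb ρ β, Ψ.pair θ (Ψ.coroot t) ≤ ∑ t ∈ {θ, θ'}, Ψ.pair θ (Ψ.coroot t) :=
        Finset.sum_le_sum_of_subset_of_nonpos' (Finset.insert_subset hθ (by simpa using hθ'))
          fun t ht htn => pair_coroot_nonpos_of_mem_orb hact hΔ hstab hβ hθ ht
            fun h => htn (h ▸ Finset.mem_insert_self θ _)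
    _ = 2 + Ψ.pair θ (Ψ.coroot θ') := by
        rw [Finset.sum_pair hne, Ψ.pair_self θ (hact.mem_roots_of_mem_orb hβ hθ)]

theorem sum_pair_coroot_orb_of_isOrthogonalSet (hβ : β ∈ Ψ.roots)
    (h : IsOrthogonalSet Ψ (orb ρ β)) : ∑ t ∈ orb ρ β, Ψ.pair β (Ψ.coroot t) = 2 := by
  rw [Finset.sum_eq_single_of_mem β (mem_orb_self ρ β) fun t ht hne =>
    h β (mem_orb_self ρ β) t ht hne.symm, Ψ.pair_self β hβ]

end Orbit

theorem orbit_coroot_sum_pairing_general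
    [Fintype Γ]
    (Ψ : ZRootDatum X Y) (ρ : Γ →* AddAut X) (ρ' : Γ →* AddAut Y)
    (hact : RDAction Ψ ρ ρ') (Δ : Finset X) (hΔ : Ψ.IsBase Δ)
    (hstab : ∀ γ : Γ, ∀ a ∈ Δ, ρ γ a ∈ Δ)
    (β β' : X) (hβ : β ∈ Ψ.roots)
    (heq : istar ρ β = istar ρ β') :
    (∑ θ ∈ orb ρ β, Ψ.pair β' (Ψ.coroot θ)) = (∑ θ ∈ orb ρ β, Ψ.pair β (Ψ.coroot θ)) ∧
    (∑ θ ∈ orb ρ β, Ψ.pair β (Ψ.coroot θ)) =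
      (if IsOrthogonalSet Ψ (orb ρ β) then 2 else 1) := by
  refine ⟨?_, ?_⟩
  · simpa only [map_sum] using (hact.pair_eq_of_istar_eq (hact.map_sum_coroot_orb hβ) heq).symm
  split_ifs with horth
  · exact sum_pair_coroot_orb_of_isOrthogonalSet hβ horth
  simp only [IsOrthogonalSet, not_forall] at horth
  obtain ⟨θ, hθ, θ', hθ', hne, hpair⟩ := horth
  have hpos := sum_pair_coroot_orb_pos hact hΔ hstab hβ
  have hle := sum_pair_coroot_orb_le hact hΔ hstab hβ hθ hθ' hne
  have hnonpos := pair_coroot_nonpos_of_mem_orb hact hΔ hstab hβ hθ hθ' hne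
  omega

/-- Let `Ψ` be a root datum with finite automorphism group
`Γ` stabilizing a base, and suppose `β, β' ∈ Φ` are distinct with
`i*β = i*β'`.  Then `∑_{θ ∈ Γ·β} ⟨β', θ^∨⟩ = ∑_{θ ∈ Γ·β} ⟨β, θ^∨⟩`, and this
common value equals `2` if the orbit `Γ·β` is pairwise orthogonal and `1`
otherwise. -/
theorem orbit_coroot_sum_pairing
    [Fintype Γ] [Module.Free ℤ X] [Module.Finite ℤ X]
    (Ψ : ZRootDatum X Y) (ρ : Γ →* AddAut X) (ρ' : Γ →* AddAut Y)
    (hact : RDAction Ψ ρ ρ') (Δ : Finset X) (hΔ : Ψ.IsBase Δ)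
    (hstab : ∀ γ : Γ, ∀ a ∈ Δ, ρ γ a ∈ Δ)
    (β β' : X) (hβ : β ∈ Ψ.roots) (hβ' : β' ∈ Ψ.roots)
    (hne : β ≠ β') (heq : istar ρ β = istar ρ β') :
    (∑ θ ∈ orb ρ β, Ψ.pair β' (Ψ.coroot θ)) = (∑ θ ∈ orb ρ β, Ψ.pair β (Ψ.coroot θ)) ∧
    (∑ θ ∈ orb ρ β, Ψ.pair β (Ψ.coroot θ)) =
      (if IsOrthogonalSet Ψ (orb ρ β) then 2 else 1) :=
  orbit_coroot_sum_pairing_general Ψ ρ ρ' hact Δ hΔ hstab β β' hβ heq
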